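/- arXiv:0801.0829 — 5 statements merged into one kernel-verified Lean document; each statement's English description precedes it below -/
import Mathlib

section
/- Let α > 1 and let λ : [r₀, ∞) → ℝ be a differentiable function satisfying λ'(r) + λ(r)² ≤ α² for all r ≥ r₀, with λ(r₀) ∈ (-α, α). Then for all r ≥ r₀, λ(r) ≤ α·(C·e^{2αr} - 1)/(C·e^{2αr} + 1), where C = ((α + λ(r₀))/(α - λ(r₀)))·e^{-2α r₀}. In particular λ(r) < α for all r ≥ r₀. -/
/-!
The function `μ r = α (C e^{2αr} - 1) / (C e^{2αr} + 1) = α tanh (α r + (log C) / 2)` solves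
`μ' = α² - μ²` with `μ r₀ = λ r₀`, and `μ < α`. The gap `d = μ - λ` satisfies
`d' ≥ λ² - μ² = -2μ d + d²`; the integrating factor `F = (C e^{2αr} + 1)² e^{-2αr}`, for which
`F' = 2μF`, gives `(d F)' ≥ d² F ≥ 0`, so `d F`, which vanishes at `r₀`, stays nonnegative.
-/

open Real Set

section RiccatiComparison

variable {q μ F lam : ℝ → ℝ} {a : ℝ}

theorem le_of_riccati_subsolution
    (hμ : ∀ x ≥ a, HasDerivAt μ (q x - μ x ^ 2) x)
    (hF : ∀ x ≥ a, HasDerivAt F (2 * μ x * F x) x) (hF_pos : ∀ x ≥ a, 0 < F x)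
    (hlam : ∀ x ≥ a, DifferentiableAt ℝ lam x)
    (hsub : ∀ x ≥ a, deriv lam x + lam x ^ 2 ≤ q x) (h₀ : lam a ≤ μ a) :
    ∀ x ≥ a, lam x ≤ μ x := by
  have hgap : ∀ x ≥ a, HasDerivAt (fun y => (μ y - lam y) * F y)
      ((q x - μ x ^ 2 - deriv lam x) * F x + (μ x - lam x) * (2 * μ x * F x)) x :=
    fun x hx => ((hμ x hx).sub (hlam x hx).hasDerivAt).mul (hF x hx)
  have hmono : MonotoneOn (fun y => (μ y - lam y) * F y) (Ici a) := by
    refine monotoneOn_of_hasDerivWithinAt_nonneg (convex_Ici a)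
      (fun x hx => (hgap x hx).continuousAt.continuousWithinAt)
      (fun x hx => (hgap x (interior_subset hx)).hasDerivWithinAt) fun x hxi => ?_
    have hx : a ≤ x := interior_subset hxi
    have hsq : 0 ≤ (μ x - lam x) ^ 2 * F x := mul_nonneg (sq_nonneg _) (hF_pos x hx).le
    nlinarith [hsub x hx, hF_pos x hx]
  intro x hx
  have hgap_a : 0 ≤ (μ a - lam a) * F a := mul_nonneg (sub_nonneg.2 h₀) (hF_pos a le_rfl).le
  have hgap_x : (μ a - lam a) * F a ≤ (μ x - lam x) * F x := hmono self_mem_Ici hx hx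
  exact sub_nonneg.1 (nonneg_of_mul_nonneg_left (hgap_a.trans hgap_x) (hF_pos x hx))

end RiccatiComparison

section RiccatiSolution

variable {α C : ℝ}

noncomputable def riccatiSolution (α C s : ℝ) : ℝ :=
  α * (C * exp (2 * α * s) - 1) / (C * exp (2 * α * s) + 1)

noncomputable def riccatiIntegratingFactor (α C s : ℝ) : ℝ :=
  (C * exp (2 * α * s) + 1) ^ 2 * exp (-2 * α * s)

theorem hasDerivAt_const_mul_exp_two_mul (α C s : ℝ) :
    HasDerivAt (fun t => C * exp (2 * α * t)) (C * exp (2 * α * s) * (2 * α)) s := by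
  simpa [mul_assoc] using (((hasDerivAt_id s).const_mul (2 * α)).exp).const_mul C

theorem hasDerivAt_riccatiSolution (hC : 0 ≤ C) (s : ℝ) :
    HasDerivAt (riccatiSolution α C) (α ^ 2 - riccatiSolution α C s ^ 2) s := by
  have hE := hasDerivAt_const_mul_exp_two_mul α C s
  have hpos : 0 < C * exp (2 * α * s) + 1 := by positivity
  refine (((hE.sub_const 1).const_mul α).div (hE.add_const 1) hpos.ne').congr_deriv ?_
  rw [riccatiSolution]
  field_simp
  ring

theorem hasDerivAt_riccatiIntegratingFactor (α C s : ℝ) :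
    HasDerivAt (riccatiIntegratingFactor α C)
      (2 * riccatiSolution α C s * riccatiIntegratingFactor α C s) s := by
  have hE := hasDerivAt_const_mul_exp_two_mul α C s
  have hE' : HasDerivAt (fun t => exp (-2 * α * t)) (exp (-2 * α * s) * (-2 * α)) s := by
    simpa using ((hasDerivAt_id s).const_mul (-2 * α)).exp
  refine (((hE.add_const 1).pow 2).mul hE').congr_deriv ?_
  rw [riccatiSolution, riccatiIntegratingFactor, Pi.pow_apply]
  field_simp
  ring

theorem riccatiIntegratingFactor_pos (hC : 0 ≤ C) (s : ℝ) :
    0 < riccatiIntegratingFactor α C s := by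
  unfold riccatiIntegratingFactor
  positivity

theorem riccatiSolution_lt (hα : 0 < α) (hC : 0 ≤ C) (s : ℝ) : riccatiSolution α C s < α := by
  have hpos : 0 < C * exp (2 * α * s) + 1 := by positivity
  rw [riccatiSolution, div_lt_iff₀ hpos]
  linarith

theorem riccatiSolution_eq_of_mem_Ioo {y : ℝ} (hy : y ∈ Ioo (-α) α) (r₀ : ℝ) :
    riccatiSolution α ((α + y) / (α - y) * exp (-2 * α * r₀)) r₀ = y := by
  obtain ⟨hl, hr⟩ := hy
  have hE : (α + y) / (α - y) * exp (-2 * α * r₀) * exp (2 * α * r₀) = (α + y) / (α - y) := by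
    rw [mul_assoc, ← exp_add]
    simp
  have hαy : 0 < α - y := by linarith
  have hden : 0 < (α + y) / (α - y) + 1 := by
    have : 0 < α + y := by linarith
    positivity
  rw [riccatiSolution, hE, div_eq_iff hden.ne']
  field_simp
  ring

end RiccatiSolution

theorem riccati_upper_bound_general (α r₀ : ℝ) (lam : ℝ → ℝ)
    (hdiff : ∀ r ≥ r₀, DifferentiableAt ℝ lam r)
    (hineq : ∀ r ≥ r₀, deriv lam r + (lam r) ^ 2 ≤ α ^ 2)
    (h0 : lam r₀ ∈ Set.Ioo (-α) α) :
    ∀ r ≥ r₀,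
      lam r ≤ α * (((α + lam r₀) / (α - lam r₀)) * Real.exp (-2 * α * r₀) *
          Real.exp (2 * α * r) - 1) /
        (((α + lam r₀) / (α - lam r₀)) * Real.exp (-2 * α * r₀) *
          Real.exp (2 * α * r) + 1) ∧
      lam r < α := by
  have hα : 0 < α := by linarith [h0.1, h0.2]
  set C := (α + lam r₀) / (α - lam r₀) * exp (-2 * α * r₀)
  have hC : 0 ≤ C :=
    mul_nonneg (div_nonneg (by linarith [h0.1]) (by linarith [h0.2])) (exp_pos _).le
  have hle : ∀ r ≥ r₀, lam r ≤ riccatiSolution α C r :=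
    le_of_riccati_subsolution (q := fun _ => α ^ 2)
      (fun x _ => hasDerivAt_riccatiSolution hC x)
      (fun x _ => hasDerivAt_riccatiIntegratingFactor α C x)
      (fun x _ => riccatiIntegratingFactor_pos hC x) hdiff hineq
      (riccatiSolution_eq_of_mem_Ioo h0 r₀).ge
  exact fun r hr => ⟨hle r hr, (hle r hr).trans_lt (riccatiSolution_lt hα hC r)⟩

/-- Upper-bound half of the Riccati comparison estimate: if `λ' + λ² ≤ α²` on `[r₀, ∞)`
with `λ(r₀) ∈ (-α, α)`, then `λ(r) ≤ α (C e^{2αr} - 1)/(C e^{2αr} + 1)` where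
`C = ((α + λ(r₀))/(α - λ(r₀))) e^{-2α r₀}`; in particular `λ(r) < α`. -/
theorem riccati_upper_bound (α r₀ : ℝ) (hα : 1 < α) (lam : ℝ → ℝ)
    (hdiff : ∀ r ≥ r₀, DifferentiableAt ℝ lam r)
    (hineq : ∀ r ≥ r₀, deriv lam r + (lam r) ^ 2 ≤ α ^ 2)
    (h0 : lam r₀ ∈ Set.Ioo (-α) α) :
    ∀ r ≥ r₀,
      lam r ≤ α * (((α + lam r₀) / (α - lam r₀)) * Real.exp (-2 * α * r₀) *
          Real.exp (2 * α * r) - 1) /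
        (((α + lam r₀) / (α - lam r₀)) * Real.exp (-2 * α * r₀) *
          Real.exp (2 * α * r) + 1) ∧
      lam r < α :=
  riccati_upper_bound_general α r₀ lam hdiff hineq h0
end

section
/- Let C, C₁, r₀ > 0 and let λ : [r₀, ∞) → ℝ be differentiable with 0 ≤ λ(r) ≤ C₁ and 1 - C·e^{-2r} ≤ λ'(r) + λ(r)² ≤ 1 + C·e^{-2r} for all r ≥ r₀. Then for every β' ∈ (0,1) there is a constant C₂ such that |λ(r) - 1| ≤ C₂·e^{-β' r} for all r ≥ r₀. -/
/-! With `u = λ - 1` the Riccati inequality reads `u' = ε - u (λ + 1)` with `|ε| ≤ C e^{-2r}`,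
so `λ ≥ 0` and `|u| ≤ C₁ + 1` give `(u²)' + 2u² ≤ 2 (C₁ + 1) C e^{-2r}`. For `β' < 1` the
function `u² e^{2β' r} + K e^{-2(1-β') r}` then has nonpositive derivative for a suitable `K`,
so it is bounded by its value at `r₀`, i.e. `u² = O(e^{-2β' r})`. -/

open Real Set

lemma riccati_sq_sub_one_deriv_le {l l' M E : ℝ} (hl : 0 ≤ l) (hM : |l - 1| ≤ M)
    (hE : |l' + l ^ 2 - 1| ≤ E) :
    2 * (l - 1) * l' + 2 * (l - 1) ^ 2 ≤ 2 * M * E := by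
  have hcross : (l - 1) * (l' + l ^ 2 - 1) ≤ M * E :=
    (le_abs_self _).trans <| (abs_mul _ _).trans_le <|
      mul_le_mul hM hE (abs_nonneg _) ((abs_nonneg _).trans hM)
  have hdamp : 0 ≤ l * (l - 1) ^ 2 := by positivity
  linarith [show 2 * (l - 1) * l' + 2 * (l - 1) ^ 2
      = 2 * ((l - 1) * (l' + l ^ 2 - 1)) - 2 * (l * (l - 1) ^ 2) by ring]

section LinearDecay

variable {v v' : ℝ → ℝ} {a b B r₀ : ℝ}

lemma antitoneOn_mul_exp_add_of_deriv_add_mul_le (hab : a < b)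
    (hv : ∀ r ≥ r₀, HasDerivAt v (v' r) r)
    (hineq : ∀ r ≥ r₀, v' r + a * v r ≤ B * exp (-b * r)) :
    AntitoneOn (fun r ↦ v r * exp (a * r) + B / (b - a) * exp (-(b - a) * r)) (Ici r₀) := by
  set K := B / (b - a)
  set g : ℝ → ℝ := fun r ↦ v r * exp (a * r) + K * exp (-(b - a) * r)
  have hg : ∀ r ≥ r₀, HasDerivAt g
      ((v' r + a * v r) * exp (a * r) - K * (b - a) * exp (-(b - a) * r)) r := by
    intro r hr
    have hexp (c : ℝ) : HasDerivAt (fun r ↦ exp (c * r)) (exp (c * r) * c) r := by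
      simpa using ((hasDerivAt_id r).const_mul c).exp
    refine (((hv r hr).fun_mul (hexp a)).fun_add ((hexp (-(b - a))).const_mul K)).congr_deriv ?_
    ring
  have hg_nonpos : ∀ r ≥ r₀,
      (v' r + a * v r) * exp (a * r) - K * (b - a) * exp (-(b - a) * r) ≤ 0 := by
    intro r hr
    have hK : K * (b - a) = B := div_mul_cancel₀ B (sub_pos.2 hab).ne'
    have hsplit : exp (-(b - a) * r) = exp (-b * r) * exp (a * r) := by
      rw [← exp_add]; congr 1; ring
    rw [hK, hsplit, ← mul_assoc, sub_nonpos]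
    exact mul_le_mul_of_nonneg_right (hineq r hr) (exp_pos _).le
  refine antitoneOn_of_deriv_nonpos (convex_Ici r₀)
    (fun r hr ↦ (hg r hr).continuousAt.continuousWithinAt) ?_ ?_ <;> rw [interior_Ici]
  · exact fun r hr ↦ (hg r hr.le).differentiableAt.differentiableWithinAt
  · exact fun r hr ↦ (hg r hr.le).deriv ▸ hg_nonpos r hr.le

lemma exists_le_mul_exp_of_deriv_add_mul_le (hab : a < b) (hB : 0 ≤ B)
    (hv : ∀ r ≥ r₀, HasDerivAt v (v' r) r)
    (hineq : ∀ r ≥ r₀, v' r + a * v r ≤ B * exp (-b * r)) :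
    ∃ D, ∀ r ≥ r₀, v r ≤ D * exp (-a * r) := by
  set D := v r₀ * exp (a * r₀) + B / (b - a) * exp (-(b - a) * r₀)
  refine ⟨D, fun r hr ↦ ?_⟩
  have hmono := antitoneOn_mul_exp_add_of_deriv_add_mul_le hab hv hineq self_mem_Ici hr hr
  have hcorr : 0 ≤ B / (b - a) * exp (-(b - a) * r) :=
    mul_nonneg (div_nonneg hB (sub_pos.2 hab).le) (exp_pos _).le
  have hvexp : v r * exp (a * r) ≤ D := by simp only at hmono; linarith
  rwa [← le_div_iff₀ (exp_pos _), div_eq_mul_inv, ← exp_neg, ← neg_mul] at hvexp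

end LinearDecay

theorem riccati_weak_decay_general (C C₁ r₀ : ℝ) (hC : 0 < C) (hC₁ : 0 < C₁)
    (lam : ℝ → ℝ) (hdiff : ∀ r ≥ r₀, DifferentiableAt ℝ lam r)
    (hbound : ∀ r ≥ r₀, 0 ≤ lam r ∧ lam r ≤ C₁)
    (hineq : ∀ r ≥ r₀,
      1 - C * Real.exp (-2 * r) ≤ deriv lam r + (lam r) ^ 2 ∧
      deriv lam r + (lam r) ^ 2 ≤ 1 + C * Real.exp (-2 * r)) :
    ∀ β' ∈ Set.Ioo (0 : ℝ) 1, ∃ C₂ : ℝ, ∀ r ≥ r₀,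
      |lam r - 1| ≤ C₂ * Real.exp (-β' * r) := by
  rintro β' ⟨-, hβ1⟩
  have hsq_deriv : ∀ r ≥ r₀,
      HasDerivAt (fun r ↦ (lam r - 1) ^ 2) (2 * (lam r - 1) * deriv lam r) r := fun r hr ↦ by
    simpa [mul_comm] using ((hdiff r hr).hasDerivAt.sub_const 1).fun_pow 2
  have hsq_ineq : ∀ r ≥ r₀, 2 * (lam r - 1) * deriv lam r + 2 * β' * (lam r - 1) ^ 2
      ≤ 2 * (C₁ + 1) * C * exp (-2 * r) := by
    intro r hr
    obtain ⟨hl0, hlC₁⟩ := hbound r hr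
    obtain ⟨hlower, hupper⟩ := hineq r hr
    have hriccati := riccati_sq_sub_one_deriv_le (l' := deriv lam r) (M := C₁ + 1)
      (E := C * exp (-2 * r)) hl0 (abs_le.2 ⟨by linarith, by linarith⟩)
      (abs_le.2 ⟨by linarith, by linarith⟩)
    linarith [mul_nonneg (sub_nonneg.2 hβ1.le) (sq_nonneg (lam r - 1))]
  obtain ⟨D, hD⟩ := exists_le_mul_exp_of_deriv_add_mul_le (by linarith : 2 * β' < 2)
    (by positivity) hsq_deriv hsq_ineq
  refine ⟨√D, fun r hr ↦ ?_⟩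
  have hexp : exp (-(2 * β') * r) = exp (-β' * r) ^ 2 := by
    rw [← exp_nat_mul]; ring_nf
  calc |lam r - 1| ≤ √(D * exp (-β' * r) ^ 2) := abs_le_sqrt (hexp ▸ hD r hr)
    _ = √D * exp (-β' * r) := by rw [sqrt_mul' _ (sq_nonneg _), sqrt_sq (exp_pos _).le]

/-- First (weaker) decay estimate of Lemma 2.2: a bounded solution of the Riccati
inequality `1 - Ce^{-2r} ≤ λ' + λ² ≤ 1 + Ce^{-2r}` with `0 ≤ λ ≤ C₁` satisfies
`|λ(r) - 1| ≤ C₂ e^{-β' r}` for every `β' ∈ (0,1)`. -/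
theorem riccati_weak_decay (C C₁ r₀ : ℝ) (hC : 0 < C) (hC₁ : 0 < C₁) (hr₀ : 0 < r₀)
    (lam : ℝ → ℝ) (hdiff : ∀ r ≥ r₀, DifferentiableAt ℝ lam r)
    (hbound : ∀ r ≥ r₀, 0 ≤ lam r ∧ lam r ≤ C₁)
    (hineq : ∀ r ≥ r₀,
      1 - C * Real.exp (-2 * r) ≤ deriv lam r + (lam r) ^ 2 ∧
      deriv lam r + (lam r) ^ 2 ≤ 1 + C * Real.exp (-2 * r)) :
    ∀ β' ∈ Set.Ioo (0 : ℝ) 1, ∃ C₂ : ℝ, ∀ r ≥ r₀,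
      |lam r - 1| ≤ C₂ * Real.exp (-β' * r) :=
  riccati_weak_decay_general C C₁ r₀ hC hC₁ lam hdiff hbound hineq
end

section
/- Let C, C₁, r₀ > 0 and let λ : [r₀, ∞) → ℝ be differentiable with 0 ≤ λ(r) ≤ C₁ and 1 - C·e^{-2r} ≤ λ'(r) + λ(r)² ≤ 1 + C·e^{-2r} for all r ≥ r₀. Then for every β < 1 there is a constant C₃ such that |λ(r) - 1| ≤ C₃·e^{-(3/2)β r} for all r ≥ r₀. -/
/-!
With `u = λ - 1` and `E = λ' + λ² - 1`, `|E| ≤ Ce^{-2r}`, one has `(u²)' + (4 + 2u)u² = 2uE`,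
and `4 + 2u = 2 + 2λ ≥ 2`. Hence `(u²)' + 2u² ≤ 2(C₁ + 1)Ce^{-2r}`, and integrating against
`e^{2r}` gives `|u| = O(e^{-βr})` for every `β < 1`. Feeding this back in,
`(u²)' + 4u² ≤ 2|u|³ + 2|u|Ce^{-2r} = O(e^{-3βr})`, and integrating against `e^{4r}` gives
`u² = O(e^{-3βr})`.
-/

open Real Set

theorem exp_neg_mul_le_exp_mul_exp_neg_mul {c c' r₀ r : ℝ} (hcc' : c ≤ c') (hr : r₀ ≤ r) :
    exp (-c' * r) ≤ exp ((c - c') * r₀) * exp (-c * r) := by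
  rw [← exp_add]
  exact exp_le_exp.2 (by nlinarith)

theorem le_mul_exp_of_deriv_add_mul_le {v : ℝ → ℝ} {a c M r₀ : ℝ} (hca : c < a)
    (hv : ∀ r ≥ r₀, DifferentiableAt ℝ v r)
    (hineq : ∀ r ≥ r₀, deriv v r + a * v r ≤ M * exp (-c * r)) :
    ∃ K, ∀ r ≥ r₀, v r ≤ K * exp (-c * r) := by
  obtain ⟨m, hm⟩ : ∃ m, m * (a - c) = M := ⟨M / (a - c), div_mul_cancel₀ _ (sub_pos.2 hca).ne'⟩
  set w : ℝ → ℝ := fun s => exp (a * s) * v s - m * exp ((a - c) * s)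
  have hw (r : ℝ) (hr : r₀ ≤ r) :
      HasDerivAt w (exp (a * r) * (deriv v r + a * v r - M * exp (-c * r))) r := by
    have hexp : exp (a * r) * exp (-c * r) = exp ((a - c) * r) := by rw [← exp_add]; ring_nf
    refine ((((hasDerivAt_id' r).const_mul a).exp.mul (hv r hr).hasDerivAt).sub
      (((hasDerivAt_id' r).const_mul (a - c)).exp.const_mul m)).congr_deriv ?_
    simp only [mul_one]
    linear_combination M * hexp - exp ((a - c) * r) * hm
  have hanti : AntitoneOn w (Ici r₀) := by
    refine antitoneOn_of_hasDerivWithinAt_nonpos (f' := fun r => exp (a * r) *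
        (deriv v r + a * v r - M * exp (-c * r))) (convex_Ici r₀)
      (fun x hx => (hw x hx).continuousAt.continuousWithinAt) (fun x hx => ?_) (fun x hx => ?_)
      <;> rw [interior_Ici] at hx
    · exact (hw x hx.le).hasDerivWithinAt
    · exact mul_nonpos_of_nonneg_of_nonpos (exp_pos _).le (sub_nonpos.2 (hineq x hx.le))
  refine ⟨max (w r₀) 0 * exp ((c - a) * r₀) + m, fun r hr => ?_⟩
  have hwr : w r ≤ max (w r₀) 0 := (hanti self_mem_Ici hr hr).trans (le_max_left _ _)
  have hv_eq : v r = exp (-a * r) * w r + m * exp (-c * r) := by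
    have h₁ : exp (-a * r) * exp (a * r) = 1 := by rw [← exp_add]; ring_nf; exact exp_zero
    have h₂ : exp (-a * r) * exp ((a - c) * r) = exp (-c * r) := by rw [← exp_add]; ring_nf
    simp only [w]
    linear_combination (-v r) * h₁ + m * h₂
  calc v r = exp (-a * r) * w r + m * exp (-c * r) := hv_eq
    _ ≤ exp (-a * r) * max (w r₀) 0 + m * exp (-c * r) := by gcongr
    _ ≤ exp ((c - a) * r₀) * exp (-c * r) * max (w r₀) 0 + m * exp (-c * r) := by
      gcongr
      exact exp_neg_mul_le_exp_mul_exp_neg_mul hca.le hr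
    _ = (max (w r₀) 0 * exp ((c - a) * r₀) + m) * exp (-c * r) := by ring

theorem abs_le_sqrt_mul_exp_of_sq_le {x K t : ℝ} (h : x ^ 2 ≤ K * exp (2 * t)) :
    |x| ≤ √K * exp t := by
  calc |x| ≤ √(K * exp (2 * t)) := abs_le_sqrt h
    _ = √K * exp t := by rw [sqrt_mul' _ (exp_pos _).le, ← exp_half]; ring_nf

theorem mul_le_abs_mul_of_abs_le {a b ε : ℝ} (h : |b| ≤ ε) : a * b ≤ |a| * ε :=
  (le_abs_self _).trans ((abs_mul a b).trans_le (mul_le_mul_of_nonneg_left h (abs_nonneg a)))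

-- With `u = x - 1` and `E = y + x² - 1`: `2uy + 2u² = 2uE - 2xu²` and `2uy + 4u² = 2uE - 2u³`.
theorem two_mul_sub_one_mul_add_two_mul_sq_le {x y ε : ℝ} (hx : 0 ≤ x) (h : |y + x ^ 2 - 1| ≤ ε) :
    2 * (x - 1) * y + 2 * (x - 1) ^ 2 ≤ 2 * |x - 1| * ε := by
  nlinarith [mul_le_abs_mul_of_abs_le (a := x - 1) h, mul_nonneg hx (sq_nonneg (x - 1))]

theorem two_mul_sub_one_mul_add_four_mul_sq_le {x y ε : ℝ} (h : |y + x ^ 2 - 1| ≤ ε) :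
    2 * (x - 1) * y + 4 * (x - 1) ^ 2 ≤ 2 * |x - 1| ^ 3 + 2 * |x - 1| * ε := by
  have hcube : -(x - 1) ^ 3 ≤ |x - 1| ^ 3 := by rw [← abs_pow]; exact neg_le_abs _
  linear_combination 2 * mul_le_abs_mul_of_abs_le (a := x - 1) h + 2 * hcube

section Riccati

variable {lam : ℝ → ℝ} {C r₀ : ℝ}

theorem hasDerivAt_sub_one_sq {r : ℝ} (h : DifferentiableAt ℝ lam r) :
    HasDerivAt (fun s => (lam s - 1) ^ 2) (2 * (lam r - 1) * deriv lam r) r := by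
  simpa using (h.hasDerivAt.sub_const 1).fun_pow 2

theorem riccati_exp_decay {C₁ β : ℝ} (hC : 0 ≤ C) (hβ : β < 1)
    (hdiff : ∀ r ≥ r₀, DifferentiableAt ℝ lam r)
    (hbound : ∀ r ≥ r₀, 0 ≤ lam r ∧ lam r ≤ C₁)
    (hE : ∀ r ≥ r₀, |deriv lam r + lam r ^ 2 - 1| ≤ C * exp (-2 * r)) :
    ∃ K, ∀ r ≥ r₀, |lam r - 1| ≤ K * exp (-β * r) := by
  have hforce (r : ℝ) (hr : r ≥ r₀) : deriv (fun s => (lam s - 1) ^ 2) r + 2 * (lam r - 1) ^ 2 ≤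
      2 * (C₁ + 1) * C * exp ((2 * β - 2) * r₀) * exp (-(2 * β) * r) := by
    obtain ⟨h0, h1⟩ := hbound r hr
    have hu : |lam r - 1| ≤ C₁ + 1 := abs_le.2 ⟨by linarith, by linarith⟩
    rw [(hasDerivAt_sub_one_sq (hdiff r hr)).deriv]
    calc 2 * (lam r - 1) * deriv lam r + 2 * (lam r - 1) ^ 2
        ≤ 2 * |lam r - 1| * (C * exp (-2 * r)) :=
          two_mul_sub_one_mul_add_two_mul_sq_le h0 (hE r hr)
      _ ≤ 2 * (C₁ + 1) * (C * (exp ((2 * β - 2) * r₀) * exp (-(2 * β) * r))) := by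
        have : 0 ≤ C₁ + 1 := by linarith
        gcongr
        exact exp_neg_mul_le_exp_mul_exp_neg_mul (by linarith) hr
      _ = 2 * (C₁ + 1) * C * exp ((2 * β - 2) * r₀) * exp (-(2 * β) * r) := by ring
  obtain ⟨K, hK⟩ := le_mul_exp_of_deriv_add_mul_le (by linarith)
    (fun r hr => (hasDerivAt_sub_one_sq (hdiff r hr)).differentiableAt) hforce
  exact ⟨√K, fun r hr => abs_le_sqrt_mul_exp_of_sq_le (by convert hK r hr using 3; ring)⟩

theorem riccati_exp_decay_bootstrap {K β : ℝ} (hC : 0 ≤ C) (hβ : β < 1)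
    (hdiff : ∀ r ≥ r₀, DifferentiableAt ℝ lam r)
    (hE : ∀ r ≥ r₀, |deriv lam r + lam r ^ 2 - 1| ≤ C * exp (-2 * r))
    (hK : ∀ r ≥ r₀, |lam r - 1| ≤ K * exp (-β * r)) :
    ∃ K', ∀ r ≥ r₀, |lam r - 1| ≤ K' * exp (-(3 / 2) * β * r) := by
  have hK0 : 0 ≤ K := nonneg_of_mul_nonneg_left ((abs_nonneg _).trans (hK r₀ le_rfl)) (exp_pos _)
  have hforce (r : ℝ) (hr : r ≥ r₀) : deriv (fun s => (lam s - 1) ^ 2) r + 4 * (lam r - 1) ^ 2 ≤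
      (2 * K ^ 3 + 2 * K * C * exp ((3 * β - (β + 2)) * r₀)) * exp (-(3 * β) * r) := by
    have hcube : exp (-β * r) ^ 3 = exp (-(3 * β) * r) := by rw [← exp_nat_mul]; ring_nf
    have hprod : exp (-β * r) * exp (-2 * r) = exp (-(β + 2) * r) := by rw [← exp_add]; ring_nf
    rw [(hasDerivAt_sub_one_sq (hdiff r hr)).deriv]
    calc 2 * (lam r - 1) * deriv lam r + 4 * (lam r - 1) ^ 2
        ≤ 2 * |lam r - 1| ^ 3 + 2 * |lam r - 1| * (C * exp (-2 * r)) :=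
          two_mul_sub_one_mul_add_four_mul_sq_le (hE r hr)
      _ ≤ 2 * (K * exp (-β * r)) ^ 3 + 2 * (K * exp (-β * r)) * (C * exp (-2 * r)) := by
        gcongr <;> exact hK r hr
      _ = 2 * K ^ 3 * exp (-(3 * β) * r) + 2 * K * C * exp (-(β + 2) * r) := by
        rw [← hcube, ← hprod]; ring
      _ ≤ 2 * K ^ 3 * exp (-(3 * β) * r)
          + 2 * K * C * (exp ((3 * β - (β + 2)) * r₀) * exp (-(3 * β) * r)) := by
        gcongr
        exact exp_neg_mul_le_exp_mul_exp_neg_mul (by linarith) hr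
      _ = _ := by ring
  obtain ⟨K', hK'⟩ := le_mul_exp_of_deriv_add_mul_le (by linarith)
    (fun r hr => (hasDerivAt_sub_one_sq (hdiff r hr)).differentiableAt) hforce
  exact ⟨√K', fun r hr => abs_le_sqrt_mul_exp_of_sq_le (by convert hK' r hr using 3; ring)⟩

end Riccati

theorem riccati_improved_decay_general (C C₁ r₀ : ℝ) (hC : 0 < C)
    (lam : ℝ → ℝ) (hdiff : ∀ r ≥ r₀, DifferentiableAt ℝ lam r)
    (hbound : ∀ r ≥ r₀, 0 ≤ lam r ∧ lam r ≤ C₁)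
    (hineq : ∀ r ≥ r₀,
      1 - C * Real.exp (-2 * r) ≤ deriv lam r + (lam r) ^ 2 ∧
      deriv lam r + (lam r) ^ 2 ≤ 1 + C * Real.exp (-2 * r)) :
    ∀ β < (1 : ℝ), ∃ C₃ : ℝ, ∀ r ≥ r₀,
      |lam r - 1| ≤ C₃ * Real.exp (-(3 / 2) * β * r) := by
  intro β hβ
  have hE (r : ℝ) (hr : r ≥ r₀) : |deriv lam r + lam r ^ 2 - 1| ≤ C * exp (-2 * r) :=
    abs_sub_le_iff.2 ⟨by linarith [(hineq r hr).2], by linarith [(hineq r hr).1]⟩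
  obtain ⟨K, hK⟩ := riccati_exp_decay hC.le hβ hdiff hbound hE
  exact riccati_exp_decay_bootstrap hC.le hβ hdiff hE hK

/-- Improved decay estimate of Lemma 2.2: a bounded solution of the Riccati
inequality `1 - Ce^{-2r} ≤ λ' + λ² ≤ 1 + Ce^{-2r}` with `0 ≤ λ ≤ C₁` satisfies
`|λ(r) - 1| ≤ C₃ e^{-(3/2)β r}` for every `β < 1`. -/
theorem riccati_improved_decay (C C₁ r₀ : ℝ) (hC : 0 < C) (hC₁ : 0 < C₁) (hr₀ : 0 < r₀)
    (lam : ℝ → ℝ) (hdiff : ∀ r ≥ r₀, DifferentiableAt ℝ lam r)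
    (hbound : ∀ r ≥ r₀, 0 ≤ lam r ∧ lam r ≤ C₁)
    (hineq : ∀ r ≥ r₀,
      1 - C * Real.exp (-2 * r) ≤ deriv lam r + (lam r) ^ 2 ∧
      deriv lam r + (lam r) ^ 2 ≤ 1 + C * Real.exp (-2 * r)) :
    ∀ β < (1 : ℝ), ∃ C₃ : ℝ, ∀ r ≥ r₀,
      |lam r - 1| ≤ C₃ * Real.exp (-(3 / 2) * β * r) :=
  riccati_improved_decay_general C C₁ r₀ hC lam hdiff hbound hineq
end

section
/- Let φ : [t₀, ∞) → ℝ be nonnegative and integrable, and let μ : [t₀, ∞) → ℝ be differentiable with μ'(t) + μ(t)² ≤ 1 + φ(t)e^{-2t} for all t ≥ t₀ and μ(t) ≥ 1 for all t. Set v(t) = (μ(t) - 1)·e^{2t}. Then v'(t) ≤ φ(t) for all t ≥ t₀, and consequently v(t) ≤ v(t₀) + ∫_{t₀}^{∞} φ, so μ(t) ≤ 1 + C₂·e^{-2t} for a constant C₂. -/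
open Real MeasureTheory

/-- Upper-bound step of Lemma 2.3: with `v(t) = (μ(t) - 1)e^{2t}`, the Riccati
inequality `μ' + μ² ≤ 1 + φ(t)e^{-2t}` with `μ ≥ 1` gives `v' ≤ φ`, hence
`v(t) ≤ v(t₀) + ∫_{t₀}^∞ φ` and `μ(t) ≤ 1 + C₂ e^{-2t}`. -/
theorem riccati_upper_step (t₀ : ℝ) (φ μ : ℝ → ℝ)
    (hφ0 : ∀ t ≥ t₀, 0 ≤ φ t) (hφint : IntegrableOn φ (Set.Ici t₀))
    (hdiff : ∀ t ≥ t₀, DifferentiableAt ℝ μ t)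
    (hineq : ∀ t ≥ t₀, deriv μ t + (μ t) ^ 2 ≤ 1 + φ t * Real.exp (-2 * t))
    (hμ1 : ∀ t, 1 ≤ μ t) :
    (∀ t ≥ t₀, deriv (fun s => (μ s - 1) * Real.exp (2 * s)) t ≤ φ t) ∧
    (∀ t ≥ t₀, (μ t - 1) * Real.exp (2 * t) ≤
        (μ t₀ - 1) * Real.exp (2 * t₀) + ∫ s in Set.Ici t₀, φ s) ∧
    ∃ C₂ : ℝ, ∀ t ≥ t₀, μ t ≤ 1 + C₂ * Real.exp (-2 * t) := by
  set v : ℝ → ℝ := fun s => (μ s - 1) * Real.exp (2 * s) with hv_def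
  have hv : ∀ t ≥ t₀, HasDerivAt v
      (deriv μ t * Real.exp (2 * t) + (μ t - 1) * (Real.exp (2 * t) * 2)) t := by
    intro t ht
    have h2 : HasDerivAt (fun s : ℝ => Real.exp (2 * s)) (Real.exp (2 * t) * 2) t := by
      simpa using ((hasDerivAt_id t).const_mul 2).exp
    exact (((hdiff t ht).hasDerivAt).sub_const 1).mul h2
  have hderivle : ∀ t ≥ t₀,
      deriv μ t * Real.exp (2 * t) + (μ t - 1) * (Real.exp (2 * t) * 2) ≤ φ t := by
    intro t ht
    have h1 := hineq t ht
    have hE : Real.exp (-2 * t) * Real.exp (2 * t) = 1 := by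
      rw [← Real.exp_add]; norm_num
    have hmul := mul_le_mul_of_nonneg_right h1 (Real.exp_pos (2 * t)).le
    have hEq : φ t * Real.exp (-2 * t) * Real.exp (2 * t) = φ t := by
      rw [mul_assoc, hE, mul_one]
    nlinarith [hmul, hEq, mul_nonneg (sq_nonneg (μ t - 1)) (Real.exp_pos (2 * t)).le]
  have part1 : ∀ t ≥ t₀, deriv v t ≤ φ t := fun t ht =>
    ((hv t ht).deriv) ▸ hderivle t ht
  have hφae : 0 ≤ᵐ[volume.restrict (Set.Ici t₀)] φ :=
    (ae_restrict_iff' measurableSet_Ici).2 (ae_of_all _ hφ0)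
  have part2 : ∀ t ≥ t₀, v t ≤ v t₀ + ∫ s in Set.Ici t₀, φ s := by
    intro t ht
    have key : v t - v t₀ ≤ ∫ s in t₀..t, φ s := by
      apply intervalIntegral.sub_le_integral_of_hasDeriv_right_of_le ht
        (fun x hx => ((hv x hx.1).continuousAt).continuousWithinAt)
        (fun x hx => ((hv x hx.1.le).hasDerivWithinAt))
        (hφint.mono_set (Set.Icc_subset_Ici_self))
        (fun x hx => hderivle x hx.1.le)
    have hle : ∫ s in t₀..t, φ s ≤ ∫ s in Set.Ici t₀, φ s := by
      rw [intervalIntegral.intervalIntegral_eq_integral_uIoc, if_pos ht,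
        Set.uIoc_of_le ht, one_smul]
      exact setIntegral_mono_set hφint hφae
        (HasSubset.Subset.eventuallyLE (fun x hx => le_of_lt hx.1))
    linarith
  refine ⟨part1, part2, ⟨v t₀ + ∫ s in Set.Ici t₀, φ s, ?_⟩⟩
  intro t ht
  have h := part2 t ht
  have hE : Real.exp (-2 * t) * Real.exp (2 * t) = 1 := by
    rw [← Real.exp_add]; norm_num
  have hEp := Real.exp_pos (2 * t)
  have hmul2 := mul_le_mul_of_nonneg_right h (Real.exp_pos (-2 * t)).le
  have hEq2 : (μ t - 1) * Real.exp (2 * t) * Real.exp (-2 * t) = μ t - 1 := by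
    rw [mul_assoc, ← Real.exp_add]; norm_num
  simp only [hv_def] at hmul2 ⊢
  linarith
end

section
/- Let λ : [t₀, ∞) → ℝ be differentiable with λ(t) ≥ 0, λ'(t) + λ(t)² ≥ 1 - C e^{-2t} for a constant C ≥ 0, and λ bounded above. Then for every ε > 0 there exists T such that λ(t) ≥ 1 - ε for all t ≥ T. -/
open Real Set

/-- If `deriv f ≥ c` on `[a, ∞)`, then `f` grows at least linearly. -/
lemma riccati_escape {f : ℝ → ℝ} {a c : ℝ}
    (hdiff : ∀ t ≥ a, DifferentiableAt ℝ f t)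
    (hd : ∀ t ≥ a, c ≤ deriv f t) :
    ∀ t ≥ a, f a + c * (t - a) ≤ f t := by
  intro t ht
  set g : ℝ → ℝ := fun s => f s - c * s with hg
  have hgd : ∀ s ≥ a, DifferentiableAt ℝ g s := fun s hs =>
    (hdiff s hs).sub ((differentiable_id.const_mul c) s)
  have hderiv : ∀ s ≥ a, 0 ≤ deriv g s := by
    intro s hs
    have h1 : HasDerivAt g (deriv f s - c * 1) s :=
      ((hdiff s hs).hasDerivAt).sub ((hasDerivAt_id s).const_mul c)
    have h2 : deriv g s = deriv f s - c := by simpa using h1.deriv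
    rw [h2]
    linarith [hd s hs]
  have hmono : MonotoneOn g (Ici a) := by
    apply monotoneOn_of_deriv_nonneg (convex_Ici a)
    · exact fun s hs => ((hgd s hs).continuousAt).continuousWithinAt
    · intro s hs
      rw [interior_Ici] at hs
      exact (hgd s (le_of_lt hs)).differentiableWithinAt
    · intro s hs
      rw [interior_Ici] at hs
      exact hderiv s (le_of_lt hs)
  have := hmono (self_mem_Ici) (mem_Ici.mpr ht) ht
  simp only [hg] at this
  linarith

/-- Barrier lemma: if `f a ≥ m` and `deriv f > 0` whenever `f ≤ m`, then `f ≥ m`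
on `[a, ∞)`. -/
lemma riccati_barrier {f : ℝ → ℝ} {a m c : ℝ} (hc : 0 < c)
    (hdiff : ∀ t ≥ a, DifferentiableAt ℝ f t)
    (hfa : m ≤ f a)
    (hd : ∀ t ≥ a, f t ≤ m → c ≤ deriv f t) :
    ∀ t ≥ a, m ≤ f t := by
  intro s hs
  by_contra hlt
  push_neg at hlt
  have has : a ≤ s := hs
  set K : Set ℝ := Icc a s ∩ f ⁻¹' (Ici m) with hK
  have hcont : ContinuousOn f (Icc a s) := fun t ht =>
    ((hdiff t ht.1).continuousAt).continuousWithinAt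
  have hKclosed : IsClosed K :=
    hcont.preimage_isClosed_of_isClosed isClosed_Icc isClosed_Ici
  have hKcompact : IsCompact K :=
    isCompact_Icc.of_isClosed_subset hKclosed inter_subset_left
  have hKne : K.Nonempty := ⟨a, ⟨le_rfl, has⟩, hfa⟩
  have huK : sSup K ∈ K := hKcompact.sSup_mem hKne
  set u := sSup K with hu
  obtain ⟨⟨hau, hus⟩, hfu⟩ := huK
  have hfu : m ≤ f u := hfu
  have hune : u < s := by
    rcases lt_or_eq_of_le hus with h | h
    · exact h
    · exfalso; rw [h] at hfu; linarith
  have hless : ∀ r ∈ Ioc u s, f r < m := by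
    intro r hr
    by_contra hge
    push_neg at hge
    have hrK : r ∈ K := ⟨⟨le_trans hau (le_of_lt hr.1), hr.2⟩, hge⟩
    have : r ≤ u := le_csSup hKcompact.bddAbove hrK
    exact absurd hr.1 (not_lt.mpr this)
  have hcont' : ContinuousOn f (Icc u s) :=
    hcont.mono (Icc_subset_Icc hau le_rfl)
  have hmono : StrictMonoOn f (Icc u s) := by
    apply strictMonoOn_of_deriv_pos (convex_Icc u s) hcont'
    intro x hx
    rw [interior_Icc] at hx
    have hxa : a ≤ x := le_trans hau (le_of_lt hx.1)
    have hfx : f x ≤ m := le_of_lt (hless x ⟨hx.1, le_of_lt hx.2⟩)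
    linarith [hd x hxa hfx]
  have := hmono (left_mem_Icc.mpr (le_of_lt hune)) (right_mem_Icc.mpr (le_of_lt hune)) hune
  linarith

/-- A bounded nonnegative solution of `λ' + λ² ≥ 1 - Ce^{-2t}` eventually
exceeds `1 - ε` for every `ε > 0`. -/
theorem riccati_liminf (t₀ : ℝ) (C : ℝ) (hC : 0 ≤ C) (lam : ℝ → ℝ)
    (hdiff : ∀ t ≥ t₀, DifferentiableAt ℝ lam t)
    (hpos : ∀ t ≥ t₀, 0 ≤ lam t)
    (hbdd : ∃ B : ℝ, ∀ t ≥ t₀, lam t ≤ B)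
    (hineq : ∀ t ≥ t₀, 1 - C * Real.exp (-2 * t) ≤ deriv lam t + (lam t) ^ 2) :
    ∀ ε > (0 : ℝ), ∃ T : ℝ, ∀ t ≥ T, 1 - ε ≤ lam t := by
  intro ε hε
  rcases le_or_gt 1 ε with h1 | h1
  · exact ⟨t₀, fun t ht => le_trans (by linarith) (hpos t ht)⟩
  set m : ℝ := 1 - ε with hm_def
  set c : ℝ := (1 - m ^ 2) / 2 with hc_def
  clear_value m c
  have hm0 : 0 < m := by simp only [hm_def]; linarith
  have hm1 : m < 1 := by simp only [hm_def]; linarith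
  have hc : 0 < c := by
    have : m ^ 2 < 1 := by nlinarith
    simp only [hc_def]; linarith
  set T₁ : ℝ := max t₀ (Real.log (C / c) / 2) with hT₁_def
  have hT₁t₀ : t₀ ≤ T₁ := le_max_left _ _
  have hCe : ∀ t ≥ T₁, C * Real.exp (-2 * t) ≤ c := by
    intro t ht
    rcases eq_or_lt_of_le hC with h0 | h0
    · rw [← h0]; simp; linarith
    · have hCc : 0 < C / c := div_pos h0 hc
      have ht' : Real.log (C / c) / 2 ≤ t := le_trans (le_max_right _ _) ht
      have : Real.exp (-2 * t) ≤ Real.exp (-Real.log (C / c)) := by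
        apply Real.exp_le_exp.mpr
        linarith
      calc C * Real.exp (-2 * t) ≤ C * Real.exp (-Real.log (C / c)) := by
            exact mul_le_mul_of_nonneg_left this hC
        _ = C * (c / C) := by
            rw [Real.exp_neg, Real.exp_log hCc]
            field_simp
        _ = c := by field_simp
  have hd : ∀ t ≥ T₁, lam t ≤ m → c ≤ deriv lam t := by
    intro t ht hle
    have ht₀ : t₀ ≤ t := le_trans hT₁t₀ ht
    have h1 := hineq t ht₀
    have h2 := hCe t ht
    have h3 : lam t ^ 2 ≤ m ^ 2 := by nlinarith [hpos t ht₀]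
    have : c = (1 - m ^ 2) / 2 := hc_def
    nlinarith
  have hA : ∃ t₁ ≥ T₁, m ≤ lam t₁ := by
    by_contra h
    push_neg at h
    obtain ⟨B, hB⟩ := hbdd
    have hd' : ∀ t ≥ T₁, c ≤ deriv lam t := fun t ht => hd t ht (le_of_lt (h t ht))
    have grow := riccati_escape (fun t ht => hdiff t (le_trans hT₁t₀ ht)) hd'
    set t := T₁ + (B - lam T₁ + 1) / c with ht_def
    clear_value t
    have hBl : lam T₁ ≤ B := hB T₁ hT₁t₀
    have htT : T₁ ≤ t := by
      have : 0 ≤ (B - lam T₁ + 1) / c := div_nonneg (by linarith) (le_of_lt hc)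
      linarith
    have := grow t htT
    have hct : c * (t - T₁) = B - lam T₁ + 1 := by
      rw [ht_def]
      field_simp
      ring
    rw [hct] at this
    have := hB t (le_trans hT₁t₀ htT)
    linarith
  obtain ⟨t₁, ht₁, hlam₁⟩ := hA
  refine ⟨t₁, fun t ht => ?_⟩
  have : m ≤ lam t := by
    apply riccati_barrier hc (fun s hs => hdiff s (le_trans (le_trans hT₁t₀ ht₁) hs)) hlam₁
      (fun s hs hle => hd s (le_trans ht₁ hs) hle) t ht
  linarith [this]
end
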